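/- arXiv:2110.02539 — 2 statements merged into one kernel-verified Lean document; each statement's English description precedes it below -/
import Mathlib

section
/- Let n be a squarefree natural number not divisible by 2, 7 or 13, with standard decomposition n = n_1 n_2. Then every sequence of length 2^{Ω(n_2)} · 3^{Ω(n_1)} in Z_n has a nonempty subsequence of consecutive terms which is a U(n)^3-weighted zero-sum sequence; that is, C_{U(n)^3}(n) ≤ 2^{Ω(n_2)} · 3^{Ω(n_1)} (and hence, combined with the lower bound, C_{U(n)^3}(n) = 2^{Ω(n_2)} · 3^{Ω(n_1)}). -/
/-- A list `L` over `ZMod n` is an `A`-weighted zero-sum sequence if there are weights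
`a₁, …, a_k ∈ A` (one per term) with `a₁x₁ + ⋯ + a_kx_k = 0`. -/
def IsWeightedZeroSum {n : ℕ} (A : Set (ZMod n)) (L : List (ZMod n)) : Prop :=
  ∃ a : List (ZMod n), a.length = L.length ∧ (∀ w ∈ a, w ∈ A) ∧
    (List.zipWith (· * ·) a L).sum = 0

/-- `L` has a nonempty subsequence of consecutive terms which is an
`A`-weighted zero-sum sequence. -/
def HasConsecWZS {n : ℕ} (A : Set (ZMod n)) (L : List (ZMod n)) : Prop :=
  ∃ l₁ l₂ l₃ : List (ZMod n), L = l₁ ++ l₂ ++ l₃ ∧ l₂ ≠ [] ∧ IsWeightedZeroSum A l₂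


/-- For `n` not divisible by `7`, the factor `n₁` of the standard decomposition
`n = n₁n₂`: the product of the prime powers `p^{v_p(n)}` over primes `p ∣ n` with
`p ≡ 1 (mod 3)`. The factor `n₂` is then `n / n₁`. -/
def partOne (n : ℕ) : ℕ :=
  ∏ p ∈ n.primeFactors.filter (fun p => p % 3 = 1), p ^ n.factorization p

/-!
Locally, at a prime `p ∉ {2, 7, 13}`, a sequence over `ℤ/p` whose number of nonzero terms is `0`
or at least `c_p` (`3` if `p ≡ 1 mod 3`, else `2`) is a `U(p)³`-weighted zero sum. Since `±1` are
cubes, two adjacent nonzero terms `x, y` can be merged into the nonzero term `x + y` or `x - y`,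
which reduces to exactly `c_p` nonzero terms. If `3 ∤ p - 1`, cubing is a bijection of `U(p)` and
two terms suffice; if `p ≡ 1 mod 3`, expanding the number of solutions of `a x³ + b y³ = 1` in
Jacobi sums of a cubic character gives the main term `p - 2` and an error of at most `6 + 2 √p`,
so a solution exists once `p ≥ 19`. By the Chinese remainder theorem, weightings at the prime
factors of the squarefree `n` glue to one modulo `n`.

Globally, a sequence of length `∏ c_p` has a nonempty block in which, for every `p`, the number of
terms not divisible by `p` is `0` or at least `c_p`: either for some `p` a block of length
`∏_{q ≠ p} c_q` has no such term, and we recurse into it, or every such block has one, and then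
the whole sequence, cut into `c_p` such blocks, works.
-/

-- `IsWeightedZeroSum A L` is `HasWeightedSum A L 0` by definition; a general target `s` is what
-- lets the weights be chosen one term at a time (`hasWeightedSum_cons`).
def HasWeightedSum {n : ℕ} (A : Set (ZMod n)) (L : List (ZMod n)) (s : ZMod n) : Prop :=
  ∃ a : List (ZMod n), a.length = L.length ∧ (∀ w ∈ a, w ∈ A) ∧
    (List.zipWith (· * ·) a L).sum = s

section WeightedSum

variable {n : ℕ} {A : Set (ZMod n)}

@[simp]
theorem hasWeightedSum_nil {s : ZMod n} : HasWeightedSum A [] s ↔ s = 0 := by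
  simp [HasWeightedSum, eq_comm]

theorem hasWeightedSum_cons {x s : ZMod n} {L : List (ZMod n)} :
    HasWeightedSum A (x :: L) s ↔ ∃ a ∈ A, HasWeightedSum A L (s - a * x) := by
  constructor
  · rintro ⟨_ | ⟨a, as⟩, hlen, hA, hsum⟩
    · simp at hlen
    · simp only [List.mem_cons, forall_eq_or_imp, List.zipWith_cons_cons, List.sum_cons,
        List.length_cons, Nat.add_right_cancel_iff] at hlen hA hsum
      exact ⟨a, hA.1, as, hlen, hA.2, by rw [← hsum]; ring⟩
  · rintro ⟨a, ha, as, hlen, hA, hsum⟩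
    refine ⟨a :: as, by simpa using hlen, by simpa [ha] using hA, ?_⟩
    rw [List.zipWith_cons_cons, List.sum_cons, hsum]
    ring

theorem HasWeightedSum.of_filter_ne_zero (h1 : 1 ∈ A) {L : List (ZMod n)} {s : ZMod n}
    (h : HasWeightedSum A (L.filter (· ≠ 0)) s) : HasWeightedSum A L s := by
  induction L generalizing s with
  | nil => simpa using h
  | cons x L ih =>
    by_cases hx : x = 0
    · rw [List.filter_cons_of_neg (by simpa using hx)] at h
      exact hasWeightedSum_cons.2 ⟨1, h1, by simpa [hx] using ih h⟩
    · rw [List.filter_cons_of_pos (by simpa using hx), hasWeightedSum_cons] at h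
      obtain ⟨a, ha, hL⟩ := h
      exact hasWeightedSum_cons.2 ⟨a, ha, ih hL⟩

theorem HasWeightedSum.cons_cons_of_add_mul (hmul : ∀ a ∈ A, ∀ b ∈ A, a * b ∈ A)
    {x y w s : ZMod n} {L : List (ZMod n)} (hw : w ∈ A)
    (h : HasWeightedSum A ((x + w * y) :: L) s) : HasWeightedSum A (x :: y :: L) s := by
  obtain ⟨a, ha, hL⟩ := hasWeightedSum_cons.1 h
  refine hasWeightedSum_cons.2 ⟨a, ha, hasWeightedSum_cons.2 ⟨a * w, hmul a ha w hw, ?_⟩⟩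
  convert hL using 1
  ring

theorem HasWeightedSum.of_forall_eq_zero (h1 : 1 ∈ A) {L : List (ZMod n)}
    (hL : ∀ x ∈ L, x = 0) : HasWeightedSum A L 0 :=
  HasWeightedSum.of_filter_ne_zero h1 <| by
    rw [List.filter_eq_nil_iff.2 (by simpa using hL), hasWeightedSum_nil]

end WeightedSum

theorem exists_add_mul_ne_zero {n : ℕ} (hn : Odd n) {A : Set (ZMod n)} (h1 : 1 ∈ A)
    (hneg : -1 ∈ A) (x : ZMod n) {y : ZMod n} (hy : y ≠ 0) : ∃ w ∈ A, x + w * y ≠ 0 := by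
  by_contra! hw
  have hplus := hw 1 h1
  have hminus := hw (-1) hneg
  exact hy <| (ZMod.add_self_eq_zero_iff_eq_zero hn).1 (by linear_combination hplus - hminus)

theorem isWeightedZeroSum_of_length_ge {n : ℕ} (hn : Odd n) {A : Set (ZMod n)} (h1 : 1 ∈ A)
    (hneg : -1 ∈ A) (hmul : ∀ a ∈ A, ∀ b ∈ A, a * b ∈ A) {c : ℕ} (hc : 0 < c)
    (hbase : ∀ B : List (ZMod n), B.length = c → (∀ x ∈ B, x ≠ 0) → IsWeightedZeroSum A B)
    {B : List (ZMod n)} (hB : ∀ x ∈ B, x ≠ 0) (hlen : c ≤ B.length) :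
    IsWeightedZeroSum A B := by
  obtain ⟨d, hd⟩ := Nat.exists_eq_add_of_le hlen
  induction d generalizing B with
  | zero => exact hbase B hd hB
  | succ d ih =>
    obtain _ | ⟨x, _ | ⟨y, t⟩⟩ := B
    · simp only [List.length_nil] at hd
      omega
    · simp only [List.length_cons, List.length_nil] at hd
      omega
    obtain ⟨w, hw, hxw⟩ := exists_add_mul_ne_zero hn h1 hneg x (hB y (by simp))
    refine HasWeightedSum.cons_cons_of_add_mul hmul hw (ih ?_ ?_ ?_)
    · simpa [hxw] using fun z hz => hB z (by simp [hz])
    · simp only [List.length_cons] at hd ⊢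
      omega
    · simp only [List.length_cons] at hd ⊢
      omega

def unitPowers (R : Type*) [Monoid R] (k : ℕ) : Set R :=
  Set.range fun u : Rˣ => (u : R) ^ k

section unitPowers

variable {R : Type*} [Monoid R] {k : ℕ}

theorem IsUnit.pow_mem_unitPowers {u : R} (hu : IsUnit u) : u ^ k ∈ unitPowers R k :=
  ⟨hu.unit, rfl⟩

theorem one_mem_unitPowers : (1 : R) ∈ unitPowers R k :=
  ⟨1, by simp⟩

theorem mem_unitPowers_of_coprime (hk : (Nat.card Rˣ).Coprime k) {x : R} (hx : IsUnit x) :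
    x ∈ unitPowers R k := by
  obtain ⟨u, hu⟩ := (powCoprime hk).surjective hx.unit
  exact ⟨u, by simpa using congrArg Units.val hu⟩

theorem neg_one_mem_unitPowers [HasDistribNeg R] (hk : Odd k) : (-1 : R) ∈ unitPowers R k :=
  ⟨-1, by simp [hk.neg_one_pow]⟩

end unitPowers

theorem mul_mem_unitPowers {R : Type*} [CommMonoid R] {k : ℕ} {x y : R}
    (hx : x ∈ unitPowers R k) (hy : y ∈ unitPowers R k) : x * y ∈ unitPowers R k := by
  obtain ⟨u, rfl⟩ := hx
  obtain ⟨v, rfl⟩ := hy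
  exact ⟨u * v, by simp [mul_pow]⟩

section ChineseRemainder

variable {a b : ℕ}

theorem ZMod.chineseRemainder_fst (h : a.Coprime b) (z : ZMod (a * b)) :
    (ZMod.chineseRemainder h z).1 = ZMod.castHom (dvd_mul_right a b) (ZMod a) z :=
  RingHom.congr_fun
    (RingHom.ext_zmod ((RingHom.fst _ _).comp (ZMod.chineseRemainder h).toRingHom) _) z

theorem ZMod.chineseRemainder_snd (h : a.Coprime b) (z : ZMod (a * b)) :
    (ZMod.chineseRemainder h z).2 = ZMod.castHom (dvd_mul_left b a) (ZMod b) z :=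
  RingHom.congr_fun
    (RingHom.ext_zmod ((RingHom.snd _ _).comp (ZMod.chineseRemainder h).toRingHom) _) z

theorem ZMod.eq_of_castHom_eq_of_coprime {z z' : ZMod (a * b)} (h : a.Coprime b)
    (ha : ZMod.castHom (dvd_mul_right a b) (ZMod a) z = ZMod.castHom (dvd_mul_right a b) _ z')
    (hb : ZMod.castHom (dvd_mul_left b a) (ZMod b) z = ZMod.castHom (dvd_mul_left b a) _ z') :
    z = z' :=
  (ZMod.chineseRemainder h).injective <| Prod.ext
    (by rw [ZMod.chineseRemainder_fst, ZMod.chineseRemainder_fst, ha])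
    (by rw [ZMod.chineseRemainder_snd, ZMod.chineseRemainder_snd, hb])

theorem exists_unitPowers_castHom_eq (h : a.Coprime b) {k : ℕ} {x : ZMod a} {y : ZMod b}
    (hx : x ∈ unitPowers (ZMod a) k) (hy : y ∈ unitPowers (ZMod b) k) :
    ∃ z ∈ unitPowers (ZMod (a * b)) k, ZMod.castHom (dvd_mul_right a b) (ZMod a) z = x ∧
      ZMod.castHom (dvd_mul_left b a) (ZMod b) z = y := by
  obtain ⟨u, rfl⟩ := hx
  obtain ⟨v, rfl⟩ := hy
  set e := ZMod.chineseRemainder h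
  have hunit : IsUnit (e.symm (u, v)) :=
    (Prod.isUnit_iff.2 ⟨u.isUnit, v.isUnit⟩ : IsUnit ((u : ZMod a), (v : ZMod b))).map e.symm
  refine ⟨e.symm (u, v) ^ k, hunit.pow_mem_unitPowers, ?_, ?_⟩
  · rw [← ZMod.chineseRemainder_fst h, map_pow, e.apply_symm_apply, Prod.pow_fst]
  · rw [← ZMod.chineseRemainder_snd h, map_pow, e.apply_symm_apply, Prod.pow_snd]

theorem HasWeightedSum.of_coprime (h : a.Coprime b) {k : ℕ} {B : List (ZMod (a * b))}
    {s : ZMod (a * b)}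
    (ha : HasWeightedSum (unitPowers (ZMod a) k)
      (B.map (ZMod.castHom (dvd_mul_right a b) (ZMod a))) (ZMod.castHom (dvd_mul_right a b) _ s))
    (hb : HasWeightedSum (unitPowers (ZMod b) k)
      (B.map (ZMod.castHom (dvd_mul_left b a) (ZMod b))) (ZMod.castHom (dvd_mul_left b a) _ s)) :
    HasWeightedSum (unitPowers (ZMod (a * b)) k) B s := by
  induction B generalizing s with
  | nil =>
    simp only [List.map_nil, hasWeightedSum_nil] at ha hb ⊢
    exact ZMod.eq_of_castHom_eq_of_coprime h (by rw [ha, map_zero]) (by rw [hb, map_zero])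
  | cons x B ih =>
    rw [List.map_cons, hasWeightedSum_cons] at ha hb
    obtain ⟨u, hu, ha⟩ := ha
    obtain ⟨v, hv, hb⟩ := hb
    obtain ⟨w, hw, rfl, rfl⟩ := exists_unitPowers_castHom_eq h hu hv
    refine hasWeightedSum_cons.2 ⟨w, hw, ih ?_ ?_⟩
    · simpa only [map_sub, map_mul] using ha
    · simpa only [map_sub, map_mul] using hb

end ChineseRemainder

theorem isWeightedZeroSum_of_forall_primeFactors {n k : ℕ} (hn : Squarefree n)
    (B : List (ZMod n))
    (h : ∀ p (hp : p ∈ n.primeFactors), IsWeightedZeroSum (unitPowers (ZMod p) k)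
      (B.map (ZMod.castHom (Nat.dvd_of_mem_primeFactors hp) (ZMod p)))) :
    IsWeightedZeroSum (unitPowers (ZMod n) k) B := by
  induction n using induction_on_primes with
  | zero => exact absurd hn not_squarefree_zero
  | one =>
    exact HasWeightedSum.of_forall_eq_zero one_mem_unitPowers fun _ _ => Subsingleton.elim _ _
  | prime_mul p a hp ih =>
    obtain ⟨hpa, -, ha⟩ := Nat.squarefree_mul_iff.1 hn
    have hpa0 : p * a ≠ 0 := hn.ne_zero
    refine HasWeightedSum.of_coprime hpa ?_ ?_
    · rw [map_zero]
      exact h p (Nat.mem_primeFactors.2 ⟨hp, dvd_mul_right p a, hpa0⟩)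
    · rw [map_zero]
      refine ih ha _ fun q hq => ?_
      rw [List.map_map, ← RingHom.coe_comp, ZMod.castHom_comp]
      exact h q (Nat.primeFactors_mono (dvd_mul_left a p) hpa0 hq)

namespace MulChar

variable {F : Type*} [Field F] [Fintype F]

theorem norm_apply_eq_one (χ : MulChar F ℂ) {a : F} (ha : a ≠ 0) : ‖χ a‖ = 1 := by
  have : NeZero (orderOf χ) := ⟨χ.orderOf_pos.ne'⟩
  obtain ⟨ζ, hζ, hζa⟩ := χ.apply_mem_rootsOfUnity_orderOf ha
  rw [← hζa]
  exact Complex.norm_eq_one_of_mem_rootsOfUnity hζ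

theorem exists_pow_orderOf_eq_of_apply_eq_one {R : Type*} [CommRing R] (χ : MulChar F R)
    {t : Fˣ} (ht : χ t = 1) : ∃ u : Fˣ, u ^ orderOf χ = t := by
  obtain ⟨g, hg⟩ := IsCyclic.exists_generator (α := Fˣ)
  obtain ⟨k, rfl⟩ := mem_powers_iff_mem_zpowers.2 (hg t)
  have hχk : χ ^ k = 1 := by
    rw [MulChar.eq_iff hg, MulChar.pow_apply_coe, MulChar.one_apply_coe, ← ht,
      Units.val_pow_eq_pow_val, map_pow]
  obtain ⟨j, rfl⟩ := orderOf_dvd_of_pow_eq_one hχk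
  exact ⟨g ^ j, by rw [← pow_mul, mul_comm]⟩

theorem mem_unitPowers_three_of_sum_ne_zero {R : Type*} [CommRing R] [IsDomain R]
    {χ : MulChar F R} (hχ : orderOf χ = 3) {t : F} (ht : ∑ i ∈ Finset.range 3, (χ ^ i) t ≠ 0) :
    t ∈ unitPowers F 3 := by
  have ht0 : t ≠ 0 := by
    rintro rfl
    simp at ht
  lift t to Fˣ using ht0.isUnit
  by_cases h1 : χ t = 1
  · obtain ⟨u, hu⟩ := χ.exists_pow_orderOf_eq_of_apply_eq_one h1
    exact ⟨u, by simp only [← hχ, ← Units.val_pow_eq_pow_val, hu]⟩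
  · have h3 : χ t ^ 3 = 1 := by rw [← pow_apply_coe, ← hχ, pow_orderOf_eq_one, one_apply_coe]
    refine absurd ?_ ht
    simp only [Finset.sum_range_succ, Finset.range_zero, Finset.sum_empty, pow_apply_coe]
    have : (χ t - 1) * (1 + χ t + χ t ^ 2) = 0 := by linear_combination h3
    simpa [sub_eq_zero, h1] using this

end MulChar

section JacobiSum

variable {F : Type*} [Field F] [Fintype F]

theorem norm_jacobiSum_eq_sqrt {χ φ : MulChar F ℂ} (hχ : χ ≠ 1) (hφ : φ ≠ 1)
    (hχφ : χ * φ ≠ 1) : ‖jacobiSum χ φ‖ = √(Fintype.card F) := by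
  have hchar : ringChar ℂ ≠ ringChar F := by
    rw [ringChar.eq_zero]
    exact (CharP.char_is_prime F (ringChar F)).ne_zero.symm
  have hconj : (starRingEnd ℂ) (jacobiSum χ φ) = jacobiSum χ⁻¹ φ⁻¹ := by
    rw [← MulChar.star_eq_inv, ← MulChar.star_eq_inv]
    exact (jacobiSum_ringHomComp χ φ (starRingEnd ℂ)).symm
  have hnormSq : (Complex.normSq (jacobiSum χ φ) : ℂ) = Fintype.card F := by
    rw [← Complex.mul_conj, hconj, jacobiSum_mul_jacobiSum_inv hchar hχ hφ hχφ]
  rw [Complex.norm_def, show Complex.normSq (jacobiSum χ φ) = Fintype.card F by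
    exact_mod_cast hnormSq]

theorem sum_mul_sum_apply_eq_sum_jacobiSum {ι R : Type*} [CommRing R] (s : Finset ι)
    (ψ : ι → MulChar F R) (a b : F) :
    ∑ t, (∑ i ∈ s, ψ i (a * t)) * (∑ j ∈ s, ψ j (b * (1 - t))) =
      ∑ i ∈ s, ∑ j ∈ s, ψ i a * ψ j b * jacobiSum (ψ i) (ψ j) := by
  have hexpand : ∀ t, (∑ i ∈ s, ψ i (a * t)) * (∑ j ∈ s, ψ j (b * (1 - t))) =
      ∑ i ∈ s, ∑ j ∈ s, ψ i a * ψ j b * (ψ i t * ψ j (1 - t)) := fun t => by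
    rw [Finset.sum_mul_sum]
    refine Finset.sum_congr rfl fun i _ => Finset.sum_congr rfl fun j _ => ?_
    rw [map_mul, map_mul]
    ring
  simp only [hexpand, jacobiSum, Finset.mul_sum]
  rw [Finset.sum_comm]
  exact Finset.sum_congr rfl fun i _ => Finset.sum_comm

end JacobiSum

section Cubic

variable {F : Type*} [Field F] [Fintype F]

variable {χ : MulChar F ℂ}

theorem jacobiSum_pow_two_eq_neg_one (hχ : orderOf χ = 3) : jacobiSum χ (χ ^ 2) = -1 := by
  have hχ1 : χ ≠ 1 := by
    rintro rfl
    simp at hχ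
  have hχ3 : χ ^ 3 = 1 := hχ ▸ pow_orderOf_eq_one χ
  have hneg : χ (-1) = 1 := by
    have h3 : χ (-1) ^ 3 = 1 := by
      rw [← MulChar.pow_apply' _ three_ne_zero, hχ3, MulChar.one_apply isUnit_one.neg]
    have h2 : χ (-1) ^ 2 = 1 := by rw [← map_pow, neg_one_sq, map_one]
    linear_combination h3 - χ (-1) * h2
  have hinv : χ ^ 2 = χ⁻¹ := eq_inv_of_mul_eq_one_left (by rw [← pow_succ, hχ3])
  rw [hinv, jacobiSum_nontrivial_inv hχ1, hneg]

theorem sum_jacobiSum_range_three_sub_card (hχ : orderOf χ = 3) {a b : F} (ha : a ≠ 0)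
    (hb : b ≠ 0) :
    ∑ i ∈ Finset.range 3, ∑ j ∈ Finset.range 3,
      (χ ^ i) a * (χ ^ j) b * jacobiSum (χ ^ i) (χ ^ j) - (Fintype.card F - 2) =
      -χ b - (χ ^ 2) b - χ a - (χ ^ 2) a - χ a * (χ ^ 2) b - (χ ^ 2) a * χ b
        + χ a * χ b * jacobiSum χ χ + (χ ^ 2) a * (χ ^ 2) b * jacobiSum (χ ^ 2) (χ ^ 2) := by
  have hχ1 : χ ≠ 1 := pow_one χ ▸ pow_ne_one_of_lt_orderOf one_ne_zero (by omega)
  have hχ2 : χ ^ 2 ≠ 1 := pow_ne_one_of_lt_orderOf two_ne_zero (by omega)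
  simp only [Finset.sum_range_succ, Finset.range_zero, Finset.sum_empty, pow_zero, pow_one,
    MulChar.one_apply ha.isUnit, MulChar.one_apply hb.isUnit, jacobiSum_one_one,
    jacobiSum_one_nontrivial hχ1, jacobiSum_one_nontrivial hχ2,
    jacobiSum_comm _ (1 : MulChar F ℂ), jacobiSum_pow_two_eq_neg_one hχ,
    jacobiSum_comm (χ ^ 2) χ]
  ring

theorem norm_sum_jacobiSum_range_three_sub_card_le (hχ : orderOf χ = 3) {a b : F}
    (ha : a ≠ 0) (hb : b ≠ 0) :
    ‖∑ i ∈ Finset.range 3, ∑ j ∈ Finset.range 3,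
      (χ ^ i) a * (χ ^ j) b * jacobiSum (χ ^ i) (χ ^ j) - (Fintype.card F - 2)‖ ≤
      6 + 2 * √(Fintype.card F) := by
  have hχ1 : χ ≠ 1 := pow_one χ ▸ pow_ne_one_of_lt_orderOf one_ne_zero (by omega)
  have hχ2 : χ ^ 2 ≠ 1 := pow_ne_one_of_lt_orderOf two_ne_zero (by omega)
  have hχ3 : χ ^ 3 = 1 := hχ ▸ pow_orderOf_eq_one χ
  have hχ4 : χ ^ 2 * χ ^ 2 = χ := by
    rw [← pow_add, show 2 + 2 = 3 + 1 by rfl, pow_succ, hχ3, one_mul]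
  have hJ11 : ‖jacobiSum χ χ‖ = √(Fintype.card F) :=
    norm_jacobiSum_eq_sqrt hχ1 hχ1 (by rwa [← pow_two])
  have hJ22 : ‖jacobiSum (χ ^ 2) (χ ^ 2)‖ = √(Fintype.card F) :=
    norm_jacobiSum_eq_sqrt hχ2 hχ2 (by rwa [hχ4])
  have hnorm : ∀ ψ : MulChar F ℂ, ‖ψ a‖ = 1 ∧ ‖ψ b‖ = 1 := fun ψ =>
    ⟨ψ.norm_apply_eq_one ha, ψ.norm_apply_eq_one hb⟩
  rw [sum_jacobiSum_range_three_sub_card hχ ha hb]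
  calc _ ≤ 1 + 1 + 1 + 1 + 1 + 1 + √(Fintype.card F) + √(Fintype.card F) := by
        refine norm_add_le_of_le (norm_add_le_of_le (norm_sub_le_of_le (norm_sub_le_of_le
          (norm_sub_le_of_le (norm_sub_le_of_le (norm_sub_le_of_le ?_ ?_) ?_) ?_) ?_) ?_) ?_) ?_
        all_goals simp [hnorm, hJ11, hJ22]
    _ = 6 + 2 * √(Fintype.card F) := by ring

theorem exists_mem_unitPowers_three_add_eq_one (hF : 3 ∣ Fintype.card F - 1)
    (hF19 : 19 ≤ Fintype.card F) {a b : F} (ha : a ≠ 0) (hb : b ≠ 0) :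
    ∃ x ∈ unitPowers F 3, ∃ y ∈ unitPowers F 3, a * x + b * y = 1 := by
  obtain ⟨χ, hχ⟩ := MulChar.exists_mulChar_orderOf F hF
    (Complex.isPrimitiveRoot_exp 3 three_ne_zero)
  by_contra! hno
  have hzero : ∑ t, (∑ i ∈ Finset.range 3, (χ ^ i) (a⁻¹ * t)) *
      (∑ j ∈ Finset.range 3, (χ ^ j) (b⁻¹ * (1 - t))) = 0 := by
    refine Finset.sum_eq_zero fun t _ => ?_
    by_contra! ht
    obtain ⟨hx, hy⟩ := mul_ne_zero_iff.1 ht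
    refine hno _ (MulChar.mem_unitPowers_three_of_sum_ne_zero hχ hx) _
      (MulChar.mem_unitPowers_three_of_sum_ne_zero hχ hy) ?_
    field_simp
    ring
  have hbound := norm_sum_jacobiSum_range_three_sub_card_le hχ (inv_ne_zero ha) (inv_ne_zero hb)
  rw [← sum_mul_sum_apply_eq_sum_jacobiSum, hzero, zero_sub, norm_neg,
    show (Fintype.card F : ℂ) - 2 = ((Fintype.card F - 2 : ℝ) : ℂ) by push_cast; ring,
    Complex.norm_real, Real.norm_eq_abs] at hbound
  have hq : (19 : ℝ) ≤ Fintype.card F := by exact_mod_cast hF19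
  have hsqrt := Real.sq_sqrt (Nat.cast_nonneg (α := ℝ) (Fintype.card F))
  nlinarith [le_abs_self ((Fintype.card F : ℝ) - 2), Real.sqrt_nonneg (Fintype.card F : ℝ)]

end Cubic

-- The constant `C_{U(p)³}(p)` of the paper, for primes `p ∉ {2, 7, 13}`.
def localCubeBound (p : ℕ) : ℕ := if p % 3 = 1 then 3 else 2

theorem localCubeBound_pos (p : ℕ) : 0 < localCubeBound p := by
  unfold localCubeBound
  split <;> norm_num

section Local

variable {p : ℕ} [hp : Fact p.Prime]

theorem nineteen_le_of_mod_three_eq_one (hp3 : p % 3 = 1) (hp7 : p ≠ 7) (hp13 : p ≠ 13) :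
    19 ≤ p := by
  have := hp.out.two_le
  by_contra! hlt
  interval_cases p <;> first | omega | exact absurd hp.out (by norm_num)

theorem isWeightedZeroSum_pair (hp3 : p % 3 ≠ 1) {x y : ZMod p} (hx : x ≠ 0) (hy : y ≠ 0) :
    IsWeightedZeroSum (unitPowers (ZMod p) 3) [x, y] := by
  have hcop : (Nat.card (ZMod p)ˣ).Coprime 3 := by
    rw [Nat.card_eq_fintype_card, ZMod.card_units p]
    refine (Nat.prime_three.coprime_iff_not_dvd.2 fun h => hp3 ?_).symm
    have := hp.out.two_le
    omega
  have hw : -x / y ∈ unitPowers (ZMod p) 3 :=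
    mem_unitPowers_of_coprime hcop (div_ne_zero (neg_ne_zero.2 hx) hy).isUnit
  refine hasWeightedSum_cons.2 ⟨1, one_mem_unitPowers, hasWeightedSum_cons.2 ⟨_, hw, ?_⟩⟩
  rw [hasWeightedSum_nil]
  field_simp
  ring

theorem isWeightedZeroSum_triple (hp3 : p % 3 = 1) (hp7 : p ≠ 7) (hp13 : p ≠ 13)
    {x y z : ZMod p} (hx : x ≠ 0) (hy : y ≠ 0) (hz : z ≠ 0) :
    IsWeightedZeroSum (unitPowers (ZMod p) 3) [x, y, z] := by
  have hp1 : 3 ∣ Fintype.card (ZMod p) - 1 := by rw [ZMod.card]; omega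
  have h19 : 19 ≤ Fintype.card (ZMod p) := by
    rw [ZMod.card]; exact nineteen_le_of_mod_three_eq_one hp3 hp7 hp13
  obtain ⟨u, hu, v, hv, huv⟩ := exists_mem_unitPowers_three_add_eq_one hp1 h19
    (div_ne_zero (neg_ne_zero.2 hx) hz) (div_ne_zero (neg_ne_zero.2 hy) hz)
  refine hasWeightedSum_cons.2 ⟨u, hu, hasWeightedSum_cons.2 ⟨v, hv,
    hasWeightedSum_cons.2 ⟨1, one_mem_unitPowers, ?_⟩⟩⟩
  rw [hasWeightedSum_nil]
  field_simp at huv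
  linear_combination huv

theorem isWeightedZeroSum_cubes_of_ne_zero (hp2 : p ≠ 2) (hp7 : p ≠ 7) (hp13 : p ≠ 13)
    {B : List (ZMod p)} (hB : ∀ x ∈ B, x ≠ 0) (hlen : localCubeBound p ≤ B.length) :
    IsWeightedZeroSum (unitPowers (ZMod p) 3) B := by
  refine isWeightedZeroSum_of_length_ge (hp.out.odd_of_ne_two hp2) one_mem_unitPowers
    (neg_one_mem_unitPowers (by decide)) (fun a ha b hb => mul_mem_unitPowers ha hb)
    (localCubeBound_pos p) (fun B hlen hB => ?_) hB hlen
  unfold localCubeBound at hlen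
  split_ifs at hlen with hp3
  · obtain ⟨x, y, z, rfl⟩ := List.length_eq_three.1 hlen
    exact isWeightedZeroSum_triple hp3 hp7 hp13 (hB x (by simp)) (hB y (by simp))
      (hB z (by simp))
  · obtain ⟨x, y, rfl⟩ := List.length_eq_two.1 hlen
    exact isWeightedZeroSum_pair hp3 (hB x (by simp)) (hB y (by simp))

theorem isWeightedZeroSum_cubes_of_countP (hp2 : p ≠ 2) (hp7 : p ≠ 7) (hp13 : p ≠ 13)
    {B : List (ZMod p)}
    (hB : B.countP (· ≠ 0) = 0 ∨ localCubeBound p ≤ B.countP (· ≠ 0)) :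
    IsWeightedZeroSum (unitPowers (ZMod p) 3) B := by
  refine HasWeightedSum.of_filter_ne_zero one_mem_unitPowers ?_
  rw [List.countP_eq_length_filter] at hB
  rcases hB with hB | hB
  · rw [List.length_eq_zero_iff.1 hB, hasWeightedSum_nil]
  · exact isWeightedZeroSum_cubes_of_ne_zero hp2 hp7 hp13
      (fun x hx => by simpa using (List.mem_filter.1 hx).2) hB

end Local

theorem List.le_countP_of_forall_infix {α : Type*} (P : α → Bool) {k M : ℕ} {L : List α}
    (hL : L.length = k * M) (h : ∀ w, w <:+: L → w.length = M → 0 < w.countP P) :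
    k ≤ L.countP P := by
  induction k generalizing L with
  | zero => exact Nat.zero_le _
  | succ k ih =>
    rw [← List.take_append_drop M L, List.countP_append]
    have hhead := h (L.take M) (List.take_prefix M L).isInfix
      (by rw [List.length_take, hL, add_mul, one_mul]; omega)
    have htail := ih (L := L.drop M) (by rw [List.length_drop, hL]; ring_nf; omega)
      fun w hw => h w (hw.trans (List.drop_suffix M L).isInfix)
    omega

theorem List.exists_infix_countP_eq_zero_or_le {α ι : Type*} [DecidableEq ι]
    (P : ι → α → Bool) (c : ι → ℕ) (s : Finset ι) (hc : ∀ i ∈ s, 0 < c i) (L : List α)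
    (hL : L.length = ∏ i ∈ s, c i) :
    ∃ w, w <:+: L ∧ w ≠ [] ∧ ∀ i ∈ s, w.countP (P i) = 0 ∨ c i ≤ w.countP (P i) := by
  induction s using Finset.strongInduction generalizing L with
  | H s ih =>
    by_cases hgap : ∃ i ∈ s, ∃ w, w <:+: L ∧ w.length = ∏ j ∈ s.erase i, c j ∧ w.countP (P i) = 0
    · obtain ⟨i, hi, w, hwL, hwlen, hw0⟩ := hgap
      obtain ⟨v, hvw, hv, hgood⟩ := ih _ (Finset.erase_ssubset hi)
        (fun j hj => hc j (Finset.mem_of_mem_erase hj)) w hwlen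
      refine ⟨v, hvw.trans hwL, hv, fun j hj => ?_⟩
      rcases eq_or_ne j i with rfl | hji
      · exact .inl (Nat.eq_zero_of_le_zero (hw0 ▸ hvw.sublist.countP_le))
      · exact hgood j (Finset.mem_erase.2 ⟨hji, hj⟩)
    · push Not at hgap
      refine ⟨L, List.infix_refl L, ?_, fun i hi => .inr ?_⟩
      · rw [← List.length_pos_iff, hL]
        exact Finset.prod_pos hc
      · refine List.le_countP_of_forall_infix (P i) (M := ∏ j ∈ s.erase i, c j) ?_
          fun w hw hwlen => Nat.pos_of_ne_zero (hgap i hi w hw hwlen)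
        rw [hL, Finset.mul_prod_erase s c hi]

open ArithmeticFunction in
theorem Nat.primeFactorsList_length_prod {S : Finset ℕ} (hS : ∀ p ∈ S, p.Prime) :
    (∏ p ∈ S, p).primeFactorsList.length = S.card := by
  rw [← cardFactors_apply]
  induction S using Finset.induction_on with
  | empty => simp
  | insert p S hp ih =>
    rw [Finset.forall_mem_insert] at hS
    rw [Finset.prod_insert hp, cardFactors_mul hS.1.ne_zero
      (Finset.prod_ne_zero_iff.2 fun q hq => (hS.2 q hq).ne_zero), cardFactors_apply_prime hS.1,
      ih hS.2, Finset.card_insert_of_notMem hp, add_comm]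

theorem partOne_eq_prod {n : ℕ} (hn : Squarefree n) :
    partOne n = ∏ p ∈ n.primeFactors.filter (fun p => p % 3 = 1), p :=
  Finset.prod_congr rfl fun p hp => by
    have hp := (Finset.mem_filter.1 hp).1
    rw [Nat.factorization_eq_one_of_squarefree hn (Nat.prime_of_mem_primeFactors hp)
      (Nat.dvd_of_mem_primeFactors hp), pow_one]

theorem div_partOne_eq_prod {n : ℕ} (hn : Squarefree n) :
    n / partOne n = ∏ p ∈ n.primeFactors.filter (fun p => ¬ p % 3 = 1), p := by
  have h := Finset.prod_filter_mul_prod_filter_not n.primeFactors (fun p => p % 3 = 1) (fun p => p)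
  rw [Nat.prod_primeFactors_of_squarefree hn, ← partOne_eq_prod hn] at h
  exact Nat.div_eq_of_eq_mul_right (Nat.pos_of_ne_zero (left_ne_zero_of_mul (h ▸ hn.ne_zero)))
    h.symm

theorem prod_localCubeBound_eq {n : ℕ} (hn : Squarefree n) :
    ∏ p ∈ n.primeFactors, localCubeBound p =
      2 ^ (n / partOne n).primeFactorsList.length * 3 ^ (partOne n).primeFactorsList.length := by
  have hprime : ∀ (q : ℕ → Prop) [DecidablePred q], ∀ p ∈ n.primeFactors.filter q, p.Prime :=
    fun q _ p hp => Nat.prime_of_mem_primeFactors (Finset.mem_filter.1 hp).1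
  rw [div_partOne_eq_prod hn, partOne_eq_prod hn, Nat.primeFactorsList_length_prod (hprime _),
    Nat.primeFactorsList_length_prod (hprime _)]
  unfold localCubeBound
  rw [Finset.prod_ite, Finset.prod_const, Finset.prod_const, mul_comm]

/-- For squarefree `n` not divisible by `2`, `7` or `13`, with standard
decomposition `n = n₁n₂`, every sequence of length `2^{Ω(n₂)} · 3^{Ω(n₁)}` in `Z_n` has
a nonempty consecutive `U(n)³`-weighted zero-sum subsequence, i.e.
`C_{U(n)³}(n) ≤ 2^{Ω(n₂)} · 3^{Ω(n₁)}`. -/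
theorem C_cubes_upper_bound_squarefree (n : ℕ) (hsf : Squarefree n)
    (h2 : ¬ 2 ∣ n) (h7 : ¬ 7 ∣ n) (h13 : ¬ 13 ∣ n) :
    ∀ L : List (ZMod n),
      L.length = 2 ^ (n / partOne n).primeFactorsList.length *
          3 ^ (partOne n).primeFactorsList.length →
      HasConsecWZS {x : ZMod n | ∃ u : (ZMod n)ˣ, (u : ZMod n) ^ 3 = x} L := by
  intro L hL
  rw [← prod_localCubeBound_eq hsf] at hL
  obtain ⟨w, ⟨l₁, l₃, rfl⟩, hw, hcount⟩ := List.exists_infix_countP_eq_zero_or_le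
    (fun p x => decide ((ZMod.cast x : ZMod p) ≠ 0)) localCubeBound n.primeFactors
    (fun p _ => localCubeBound_pos p) L hL
  refine ⟨l₁, w, l₃, rfl, hw, isWeightedZeroSum_of_forall_primeFactors hsf w fun p hp => ?_⟩
  have : Fact p.Prime := ⟨Nat.prime_of_mem_primeFactors hp⟩
  have hpn := Nat.dvd_of_mem_primeFactors hp
  refine isWeightedZeroSum_cubes_of_countP (fun h => h2 (h ▸ hpn)) (fun h => h7 (h ▸ hpn))
    (fun h => h13 (h ▸ hpn)) ?_
  rw [List.countP_map]
  exact hcount p hp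
end

section
/- Let n = p^r where p is an odd prime with p ≠ 3 and p ≠ 7, and r ≥ 1. Let S be a sequence in Z_n such that at least four terms of S are units of Z_n. Then S is a U(n)^3-weighted zero-sum sequence. -/
/-!
Modulo `p` the cubes of units form a set `C` of size `(p - 1) / gcd (p - 1, 3)`, and for
`p ≠ 2, 7` this is large enough that, by the Cauchy–Davenport theorem, `v₁C + v₂C + v₃C + v₄C`
is all of `ZMod p` for any units `vᵢ`. The kernel of `(ZMod (p ^ r))ˣ → (ZMod p)ˣ` has order
`p ^ (r - 1)`, prime to `3`, so an element of `ZMod (p ^ r)` is the cube of a unit as soon as its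
reduction is. Hence a representation `t ≡ ∑ cᵢ xᵢ (mod p)` lifts: take arbitrary lifts of
`c₂, c₃, c₄` and solve for the weight of the unit `x₁`. Weighting the other terms of the sequence
only translates the set of weighted sums, which is already everything.
-/

open Finset Pointwise

section WeightedSums

variable {R S : Type*}

def weightedSums [NonUnitalNonAssocSemiring R] (A : Set R) (L : List R) : Set R :=
  {s | ∃ a : List R, a.length = L.length ∧ (∀ w ∈ a, w ∈ A) ∧
    (List.zipWith (· * ·) a L).sum = s}

section Semiring

variable [NonUnitalNonAssocSemiring R] {A : Set R}

@[simp]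
theorem weightedSums_nil : weightedSums A [] = {0} := by
  ext s
  simp [weightedSums, eq_comm]

theorem weightedSums_cons (x : R) (L : List R) :
    weightedSums A (x :: L) = (· * x) '' A + weightedSums A L := by
  ext s
  constructor
  · rintro ⟨_ | ⟨b, a⟩, hlen, hA, rfl⟩
    · simp at hlen
    · simp only [List.forall_mem_cons] at hA
      exact ⟨b * x, ⟨b, hA.1, rfl⟩, _, ⟨a, by simpa using hlen, hA.2, rfl⟩, rfl⟩
  · rintro ⟨_, ⟨b, hb, rfl⟩, _, ⟨a, hlen, hA, rfl⟩, rfl⟩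
    exact ⟨b :: a, by simp [hlen], List.forall_mem_cons.2 ⟨hb, hA⟩, rfl⟩

theorem List.Sublist.exists_vadd_weightedSums_subset (hA : A.Nonempty) {T L : List R}
    (h : T.Sublist L) : ∃ c : R, c +ᵥ weightedSums A T ⊆ weightedSums A L := by
  induction h with
  | slnil => exact ⟨0, by simp⟩
  | cons x _ ih =>
    obtain ⟨c, hc⟩ := ih
    obtain ⟨a, ha⟩ := hA
    refine ⟨a * x + c, Set.vadd_set_subset_iff.2 fun s hs => ?_⟩
    rw [weightedSums_cons, vadd_eq_add, add_assoc]
    exact Set.add_mem_add ⟨a, ha, rfl⟩ (hc ⟨s, hs, rfl⟩)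
  | cons_cons x _ ih =>
    obtain ⟨c, hc⟩ := ih
    refine ⟨c, Set.vadd_set_subset_iff.2 fun s hs => ?_⟩
    rw [weightedSums_cons] at hs ⊢
    obtain ⟨_, hb, s, hs, rfl⟩ := hs
    rw [vadd_eq_add, add_left_comm]
    exact Set.add_mem_add hb (hc ⟨s, hs, rfl⟩)

theorem weightedSums_coe_finset [DecidableEq R] (C : Finset R) (L : List R) :
    weightedSums (C : Set R) L = ↑(L.map fun x => C.image (· * x)).sum := by
  induction L with
  | nil => simp [Set.singleton_zero]
  | cons x L ih => simp [weightedSums_cons, ih]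

end Semiring

theorem weightedSums_eq_univ_of_sublist [NonUnitalNonAssocRing R] {A : Set R} (hA : A.Nonempty)
    {T L : List R} (h : T.Sublist L) (hT : weightedSums A T = Set.univ) :
    weightedSums A L = Set.univ := by
  obtain ⟨c, hc⟩ := h.exists_vadd_weightedSums_subset hA
  rw [hT, Set.vadd_set_univ] at hc
  exact Set.univ_subset_iff.1 hc

theorem weightedSums_map_subset_image [NonAssocSemiring R] [NonAssocSemiring S] {f : R →+* S}
    (hf : Function.Surjective f) (A : Set S) (L : List R) :
    weightedSums A (L.map f) ⊆ f '' weightedSums (f ⁻¹' A) L := by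
  induction L with
  | nil => simp
  | cons x L ih =>
    intro t ht
    rw [List.map_cons, weightedSums_cons] at ht
    obtain ⟨_, ⟨b, hb, rfl⟩, _, hs, rfl⟩ := ht
    obtain ⟨a, rfl⟩ := hf b
    obtain ⟨s, hs', rfl⟩ := ih hs
    refine ⟨a * x + s, ?_, by simp⟩
    rw [weightedSums_cons]
    exact Set.add_mem_add ⟨a, hb, rfl⟩ hs'

theorem weightedSums_preimage_eq_univ [Ring R] [Ring S] {f : R →+* S}
    (hf : Function.Surjective f) {A : Set S} {x : R} (hx : IsUnit x) {L : List R}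
    (h : weightedSums A ((x :: L).map f) = Set.univ) :
    weightedSums (f ⁻¹' A) (x :: L) = Set.univ := by
  refine Set.eq_univ_of_forall fun t => ?_
  have ht : f t ∈ weightedSums A ((x :: L).map f) := h ▸ Set.mem_univ _
  rw [List.map_cons, weightedSums_cons] at ht
  obtain ⟨_, ⟨a, ha, rfl⟩, _, hs, hsum⟩ := ht
  obtain ⟨s, hs', rfl⟩ := weightedSums_map_subset_image hf A L hs
  obtain ⟨u, rfl⟩ := hx
  have hb : f ((t - s) * ↑u⁻¹) = a := by
    rw [map_mul, map_sub, ← hsum, add_sub_cancel_right, mul_assoc, ← map_mul, Units.mul_inv,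
      map_one, mul_one]
  rw [weightedSums_cons]
  exact ⟨_, ⟨_, show _ ∈ f ⁻¹' A from hb ▸ ha, rfl⟩, s, hs', by simp⟩

end WeightedSums

theorem ZMod.min_le_card_list_sum {p : ℕ} (hp : p.Prime) (l : List (Finset (ZMod p)))
    (hl : ∀ s ∈ l, s.Nonempty) : min p ((l.map fun s => #s - 1).sum + 1) ≤ #l.sum := by
  induction l with
  | nil => simp
  | cons s l ih =>
    have hs : s.Nonempty := hl s List.mem_cons_self
    have ih := ih fun t ht => hl t (List.mem_cons_of_mem s ht)
    have hsum : l.sum.Nonempty := by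
      rw [← Finset.card_pos]
      have := hp.pos
      omega
    have hcd := ZMod.cauchy_davenport hp hs hsum
    have := hs.card_pos
    simp only [List.map_cons, List.sum_cons]
    omega

theorem ZMod.weightedSums_coe_eq_univ {p : ℕ} [Fact p.Prime] {C : Finset (ZMod p)}
    (hC : C.Nonempty) {L : List (ZMod p)} (hL : ∀ x ∈ L, x ≠ 0)
    (hcard : p ≤ L.length * (#C - 1) + 1) :
    weightedSums (C : Set (ZMod p)) L = Set.univ := by
  set l := L.map fun x => C.image (· * x)
  have hl : ∀ s ∈ l, s.Nonempty := by simpa [l] using fun x _ => hC.image (· * x)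
  have hcard_l : (l.map fun s => #s - 1).sum = L.length * (#C - 1) := by
    have : ∀ x ∈ L, #(C.image (· * x)) - 1 = #C - 1 := fun x hx => by
      rw [card_image_of_injective _ (mul_left_injective₀ (hL x hx))]
    simp [l, List.map_map, Function.comp_def, List.map_congr_left this]
  have hbound := ZMod.min_le_card_list_sum Fact.out l hl
  rw [hcard_l, min_eq_left hcard] at hbound
  have : l.sum = univ :=
    eq_univ_of_card _ (le_antisymm (card_le_univ _) (by simpa using hbound))
  rw [weightedSums_coe_finset, this, coe_univ]

theorem FiniteField.card_image_pow_units {F : Type*} [Field F] [Fintype F] [DecidableEq F]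
    (k : ℕ) : #(univ.image fun u : Fˣ => (u : F) ^ k) =
      (Fintype.card F - 1) / (Fintype.card F - 1).gcd k := by
  have h := IsCyclic.card_powMonoidHom_range Fˣ k
  rw [Nat.card_eq_fintype_card (α := Fˣ), Fintype.card_units] at h
  have himage : (univ.image fun u : Fˣ => (u : F) ^ k) =
      (univ.image (powMonoidHom k)).image Units.val := by
    rw [image_image]; rfl
  rw [← h, himage, card_image_of_injective _ Units.val_injective, ← Set.ncard_coe_finset,
    coe_image, coe_univ, Set.image_univ, ← Nat.card_coe_set_eq, ← MonoidHom.coe_range]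
  rfl

theorem ZMod.weightedSums_cubes_eq_univ {p : ℕ} [Fact p.Prime] (h2 : p ≠ 2) (h7 : p ≠ 7)
    {L : List (ZMod p)} (hL : ∀ x ∈ L, x ≠ 0) (h4 : 4 ≤ L.length) :
    weightedSums (Set.range fun u : (ZMod p)ˣ => (u : ZMod p) ^ 3) L = Set.univ := by
  have hp : p.Prime := Fact.out
  set C := univ.image fun u : (ZMod p)ˣ => (u : ZMod p) ^ 3
  have hC : #C * (p - 1).gcd 3 = p - 1 := by
    rw [FiniteField.card_image_pow_units, ZMod.card, Nat.div_mul_cancel (Nat.gcd_dvd_left _ _)]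
  have hgcd : (p - 1).gcd 3 = 1 ∨ (p - 1).gcd 3 = 3 :=
    (Nat.dvd_prime Nat.prime_three).1 (Nat.gcd_dvd_right _ _)
  have hodd : p % 2 = 1 := hp.eq_two_or_odd.resolve_left h2
  have hp2 := hp.two_le
  -- when `3 ∣ p - 1`, the odd prime `p ≠ 7` is at least `13`, so `(p - 1) / 3` cubes suffice
  have hcard : p ≤ L.length * (#C - 1) + 1 :=
    calc p ≤ 4 * (#C - 1) + 1 := by rcases hgcd with hg | hg <;> rw [hg] at hC <;> omega
      _ ≤ L.length * (#C - 1) + 1 := by gcongr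
  simpa [C] using ZMod.weightedSums_coe_eq_univ ⟨1, mem_image.2 ⟨1, mem_univ _, by simp⟩⟩ hL hcard

theorem MonoidHom.exists_pow_eq_of_coprime_card_ker {G H : Type*} [CommGroup G] [Group H]
    {f : G →* H} (hf : Function.Surjective f) {k : ℕ} (hk : (Nat.card f.ker).Coprime k) {g : G}
    {h : H} (hh : h ^ k = f g) : ∃ x : G, x ^ k = g := by
  obtain ⟨y, rfl⟩ := hf h
  have hker : (y ^ k)⁻¹ * g ∈ f.ker := by
    rw [mem_ker, map_mul, map_inv, map_pow, hh, inv_mul_cancel]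
  obtain ⟨m, hm⟩ := (powCoprime hk).surjective ⟨_, hker⟩
  refine ⟨y * m, ?_⟩
  rw [powCoprime_apply, Subtype.ext_iff, Subgroup.coe_pow] at hm
  rw [mul_pow, hm, mul_inv_cancel_left]

theorem ZMod.card_ker_unitsMap_prime_pow {p r : ℕ} (hp : p.Prime) (hr : r ≠ 0) :
    Nat.card (ZMod.unitsMap (dvd_pow_self p hr)).ker = p ^ (r - 1) := by
  have : NeZero p := ⟨hp.ne_zero⟩
  have hcard := (ZMod.unitsMap (dvd_pow_self p hr)).ker.card_mul_index
  rw [Subgroup.index_ker, MonoidHom.range_eq_top.2 (ZMod.unitsMap_surjective _),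
    Subgroup.card_top, Nat.card_eq_fintype_card (α := (ZMod p)ˣ),
    Nat.card_eq_fintype_card (α := (ZMod (p ^ r))ˣ), ZMod.card_units_eq_totient,
    ZMod.card_units_eq_totient, Nat.totient_prime hp, Nat.totient_prime_pow hp (by omega)] at hcard
  exact Nat.eq_of_mul_eq_mul_right (Nat.sub_pos_of_lt hp.one_lt) hcard

theorem ZMod.isUnit_castHom_prime_pow_iff {p r : ℕ} [NeZero p] (hr : r ≠ 0) (x : ZMod (p ^ r)) :
    IsUnit (ZMod.castHom (dvd_pow_self p hr) (ZMod p) x) ↔ IsUnit x := by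
  obtain ⟨k, rfl⟩ := ZMod.natCast_zmod_surjective x
  rw [map_natCast, ZMod.isUnit_iff_coprime, ZMod.isUnit_iff_coprime,
    Nat.coprime_pow_right_iff (Nat.pos_of_ne_zero hr)]

theorem ZMod.range_pow_units_prime_pow_eq_preimage {p r k : ℕ} (hp : p.Prime)
    (hk : k.Coprime p) (hr : r ≠ 0) :
    Set.range (fun u : (ZMod (p ^ r))ˣ => (u : ZMod (p ^ r)) ^ k) =
      ZMod.castHom (dvd_pow_self p hr) (ZMod p) ⁻¹'
        Set.range (fun u : (ZMod p)ˣ => (u : ZMod p) ^ k) := by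
  have : NeZero p := ⟨hp.ne_zero⟩
  ext x
  constructor
  · rintro ⟨u, rfl⟩
    exact ⟨ZMod.unitsMap (dvd_pow_self p hr) u, by
      simp only [ZMod.unitsMap_val, map_pow, ZMod.castHom_apply]⟩
  · rintro ⟨d, hd⟩
    have hx : IsUnit x :=
      (ZMod.isUnit_castHom_prime_pow_iff hr x).1 (hd ▸ d.isUnit.pow k)
    have hcop : (Nat.card (ZMod.unitsMap (dvd_pow_self p hr)).ker).Coprime k := by
      rw [ZMod.card_ker_unitsMap_prime_pow hp hr]
      exact hk.symm.pow_left _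
    obtain ⟨u, hu⟩ := MonoidHom.exists_pow_eq_of_coprime_card_ker
      (ZMod.unitsMap_surjective _) hcop (g := hx.unit) (h := d)
      (Units.ext (by simpa [ZMod.unitsMap_val] using hd))
    exact ⟨u, by simpa using congrArg Units.val hu⟩

/-- Let `n = p^r` with `p` an odd prime, `p ≠ 3, 7`, `r ≥ 1`. Any sequence
in `Z_n` with at least four unit terms is a `U(n)³`-weighted zero-sum sequence. -/
theorem cubes_wzs_of_four_units (p r : ℕ) (hp : p.Prime) (hodd : p ≠ 2)
    (h3 : p ≠ 3) (h7 : p ≠ 7) (hr : 1 ≤ r) (S : List (ZMod (p ^ r)))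
    (hfour : ∃ T : List (ZMod (p ^ r)), T.Sublist S ∧ T.length = 4 ∧ ∀ x ∈ T, IsUnit x) :
    IsWeightedZeroSum
      {x : ZMod (p ^ r) | ∃ u : (ZMod (p ^ r))ˣ, (u : ZMod (p ^ r)) ^ 3 = x} S := by
  obtain ⟨T, hTS, hT4, hTunit⟩ := hfour
  obtain ⟨x, L, rfl⟩ := List.exists_cons_of_length_pos (by omega : 0 < T.length)
  have : Fact p.Prime := ⟨hp⟩
  have hr0 : r ≠ 0 := by omega
  set π := ZMod.castHom (dvd_pow_self p hr0) (ZMod p)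
  change 0 ∈ weightedSums (Set.range fun u : (ZMod (p ^ r))ˣ => (u : ZMod (p ^ r)) ^ 3) S
  suffices hT : weightedSums (Set.range fun u : (ZMod (p ^ r))ˣ => (u : ZMod (p ^ r)) ^ 3)
      (x :: L) = Set.univ from
    weightedSums_eq_univ_of_sublist (Set.range_nonempty _) hTS hT ▸ Set.mem_univ 0
  rw [ZMod.range_pow_units_prime_pow_eq_preimage hp
    ((Nat.coprime_primes Nat.prime_three hp).2 (Ne.symm h3)) hr0]
  have hπT : ∀ y ∈ (x :: L).map π, y ≠ 0 := by
    simp only [List.mem_map]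
    rintro _ ⟨y, hy, rfl⟩
    exact ((hTunit y hy).map π).ne_zero
  exact weightedSums_preimage_eq_univ (ZMod.ringHom_surjective π) (hTunit x List.mem_cons_self)
    (ZMod.weightedSums_cubes_eq_univ hodd h7 hπT (by simpa using hT4.ge))
end
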